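/- Let (X, μ) be a probability space, let φ : X → X be measure-preserving, let 1 ≤ p < ∞, and let T_φ be the composition operator on L^p(X, μ; ℂ). If the peripheral spectrum σ(T_φ) ∩ 𝕋 is a proper subset of the unit circle 𝕋, then σ(T_φ) ∩ 𝕋 is a finite set and every λ ∈ σ(T_φ) ∩ 𝕋 is a root of unity, i.e., λ^n = 1 for some n ≥ 1. -/

import Mathlib

/-!
A contraction `T` on a Banach space has every spectral value `z` of modulus `1` on the boundary of
its spectrum, so `z` is an approximate eigenvalue: `‖T f - z • f‖ < ε ‖f‖` for some `f`. Applying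
pointwise the map `ψ(w) = w (w/|w|)^n`, which commutes with composition by `φ`, preserves moduli,
is Lipschitz and satisfies `ψ(z w) = z^(n+1) ψ(w)` for `|z| = 1`, turns an approximate eigenvector
of `T_φ` for `z` into one for `z^(n+1)`. Hence the peripheral spectrum `S` of `T_φ` is a closed
subset of the circle that is stable under positive powers.

If `S` misses an arc of length `ε`, Dirichlet's approximation theorem gives, for every `z ∈ S`, an
exponent `1 ≤ j ≤ K(ε)` with `z^j` within angle `ε` of `1`. Unless `z^j = 1`, the powers of `z^j`
move around the circle in steps shorter than `ε` and so enter the arc. Hence `z^(K!) = 1` on `S`.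
-/

open MeasureTheory Filter Set Metric
open scoped ENNReal NNReal

/-- The composition (Koopman) operator `f ↦ f ∘ φ` on `L^p(X, μ; ℂ)` for a
measure-preserving map `φ`. -/
noncomputable def lpKoopman (p : ℝ≥0∞) [Fact (1 ≤ p)] {X : Type*} [MeasurableSpace X]
    (μ : Measure X) (φ : X → X) (hφ : MeasurePreserving φ μ μ) :
    Lp ℂ p μ →L[ℂ] Lp ℂ p μ :=
  (MeasureTheory.Lp.compMeasurePreservingₗᵢ ℂ φ hφ).toContinuousLinearMap

theorem Units.one_le_norm_sub_mul_norm_inv {A : Type*} [NormedRing A]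
    [HasSummableGeomSeries A] (u : Aˣ) {a : A} (ha : ¬IsUnit a) :
    1 ≤ ‖a - u‖ * ‖(↑u⁻¹ : A)‖ := by
  have : Nontrivial A := ⟨⟨a, 1, by rintro rfl; exact ha isUnit_one⟩⟩
  rw [← inv_le_iff_one_le_mul₀ u⁻¹.norm_pos]
  exact not_lt.1 fun h => ha (u.ofNearby a h).isUnit

section ApproxEigenvalue

variable {𝕜 E : Type*} [NontriviallyNormedField 𝕜] [NormedAddCommGroup E] [NormedSpace 𝕜 E]

/-- The strict inequality forces `y ≠ 0`. -/
def IsApproxEigenvalue (T : E →L[𝕜] E) (z : 𝕜) : Prop :=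
  ∀ ε > 0, ∃ y : E, ‖T y - z • y‖ < ε * ‖y‖

theorem IsApproxEigenvalue.mem_spectrum {T : E →L[𝕜] E} {z : 𝕜} (h : IsApproxEigenvalue T z) :
    z ∈ spectrum 𝕜 T := by
  rintro ⟨u, hu⟩
  set R : E →L[𝕜] E := ↑u⁻¹
  obtain ⟨y, hy⟩ := h (‖R‖ + 1)⁻¹ (by positivity)
  have hRy : R (z • y - T y) = y := by
    have h1 : R ((u : E →L[𝕜] E) y) = y := congr($(u.inv_mul) y)
    simpa [hu, Algebra.algebraMap_eq_smul_one] using h1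
  have hy0 : 0 < ‖y‖ := by
    by_contra! hy0
    rw [norm_le_zero_iff.1 hy0] at hy
    simp at hy
  have hle : ‖y‖ ≤ ‖R‖ * (‖R‖ + 1)⁻¹ * ‖y‖ := calc
    ‖y‖ = ‖R (z • y - T y)‖ := by rw [hRy]
    _ ≤ ‖R‖ * ‖T y - z • y‖ := by rw [norm_sub_rev]; exact R.le_opNorm _
    _ ≤ ‖R‖ * (‖R‖ + 1)⁻¹ * ‖y‖ := by rw [mul_assoc]; gcongr
  have hlt : ‖R‖ * (‖R‖ + 1)⁻¹ < 1 := by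
    rw [← div_eq_mul_inv, div_lt_one (by positivity)]; linarith
  exact (hle.trans_lt (mul_lt_of_lt_one_left hy0 hlt)).false

theorem IsApproxEigenvalue.of_mem_frontier_spectrum [CompleteSpace E] {T : E →L[𝕜] E} {z : 𝕜}
    (hz : z ∈ frontier (spectrum 𝕜 T)) : IsApproxEigenvalue T z := by
  intro ε hε
  have hzσ : z ∈ spectrum 𝕜 T := (spectrum.isClosed T).frontier_subset hz
  rw [← frontier_compl] at hz
  obtain ⟨w, hwσ, hzw⟩ := Metric.mem_closure_iff.1 (frontier_subset_closure hz) (ε / 3)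
    (by positivity)
  obtain ⟨u, hu⟩ := spectrum.notMem_iff.1 hwσ
  set R : E →L[𝕜] E := ↑u⁻¹
  set d := ‖w - z‖
  have hd : 0 < d := norm_pos_iff.2 (sub_ne_zero.2 fun h => hwσ (h ▸ hzσ))
  have hR : 1 ≤ d * ‖R‖ := calc
    1 ≤ ‖algebraMap 𝕜 (E →L[𝕜] E) z - T - u‖ * ‖R‖ :=
      u.one_le_norm_sub_mul_norm_inv (spectrum.mem_iff.1 hzσ)
    _ ≤ d * ‖R‖ := by
      gcongr
      rw [hu, sub_sub_sub_cancel_right, ← map_sub, Algebra.algebraMap_eq_smul_one]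
      refine (norm_smul_le _ _).trans ?_
      rw [norm_sub_rev]
      exact mul_le_of_le_one_right (norm_nonneg _) ContinuousLinearMap.norm_id_le
  have h2d : (2 * d)⁻¹ < ‖R‖ := by
    rw [inv_lt_iff_one_lt_mul₀ (by positivity)]; linarith
  obtain ⟨x, hx⟩ : ∃ x, (2 * d)⁻¹ * ‖x‖ < ‖R x‖ := by
    by_contra! h
    exact h2d.not_ge (R.opNorm_le_bound (by positivity) h)
  refine ⟨R x, ?_⟩
  have huR : w • R x - T (R x) = x := by
    have h1 : (u : E →L[𝕜] E) (R x) = x := congr($(u.mul_inv) x)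
    simpa [hu, Algebra.algebraMap_eq_smul_one] using h1
  have hTRx : T (R x) - z • R x = (w - z) • R x - x := calc
    _ = (w - z) • R x - (w • R x - T (R x)) := by rw [sub_smul]; abel
    _ = (w - z) • R x - x := by rw [huR]
  have hx' : ‖x‖ < 2 * d * ‖R x‖ := by
    rwa [inv_mul_lt_iff₀ (by positivity)] at hx
  calc ‖T (R x) - z • R x‖ ≤ d * ‖R x‖ + ‖x‖ := by
        rw [hTRx]; exact (norm_sub_le _ _).trans_eq (by rw [norm_smul])
    _ < 3 * d * ‖R x‖ := by linarith
    _ ≤ ε * ‖R x‖ := by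
        gcongr
        rw [dist_eq_norm, norm_sub_rev] at hzw; linarith

theorem IsApproxEigenvalue.of_lipschitzWith {T : E →L[𝕜] E} {z w : 𝕜} {Ψ : E → E} {K : ℝ≥0}
    (hΨ : LipschitzWith K Ψ) (hΨT : ∀ y, Ψ (T y) = T (Ψ y)) (hΨz : ∀ y, Ψ (z • y) = w • Ψ y)
    (hΨnorm : ∀ y, ‖Ψ y‖ = ‖y‖) (h : IsApproxEigenvalue T z) : IsApproxEigenvalue T w := by
  intro ε hε
  obtain ⟨y, hy⟩ := h (ε / (K + 1)) (by positivity)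
  refine ⟨Ψ y, ?_⟩
  have hy0 : 0 < ‖y‖ := pos_of_mul_pos_right ((norm_nonneg _).trans_lt hy) (by positivity)
  calc ‖T (Ψ y) - w • Ψ y‖ = ‖Ψ (T y) - Ψ (z • y)‖ := by rw [hΨT, hΨz]
    _ ≤ K * ‖T y - z • y‖ := by
        simpa only [dist_eq_norm] using hΨ.dist_le_mul (T y) (z • y)
    _ ≤ K * (ε / (K + 1) * ‖y‖) := by gcongr
    _ < ε * ‖Ψ y‖ := by
        rw [hΨnorm, ← mul_assoc, mul_div_assoc']
        gcongr
        rw [div_lt_iff₀ (by positivity)]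
        linarith

end ApproxEigenvalue

theorem ContinuousLinearMap.mem_frontier_spectrum_of_norm_le {𝕜 E : Type*} [RCLike 𝕜]
    [NormedAddCommGroup E] [NormedSpace 𝕜 E] [CompleteSpace E] {T : E →L[𝕜] E} {z : 𝕜}
    (hz : z ∈ spectrum 𝕜 T) (hT : ‖T‖ ≤ ‖z‖) : z ∈ frontier (spectrum 𝕜 T) := by
  have hsub : spectrum 𝕜 T ⊆ closedBall 0 ‖z‖ := fun k hk => by
    rw [mem_closedBall_zero_iff]
    exact (spectrum.norm_le_norm_mul_of_mem hk).trans
      ((mul_le_of_le_one_right (norm_nonneg T) ContinuousLinearMap.norm_id_le).trans hT)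
  refine ⟨subset_closure hz, fun hint => ?_⟩
  have := interior_mono hsub hint
  rw [interior_closedBall', mem_ball_zero_iff] at this
  exact this.false

section NormalizedVector

variable {E : Type*} [NormedAddCommGroup E] [NormedSpace ℝ E]

theorem norm_inv_norm_smul_le_one (x : E) : ‖‖x‖⁻¹ • x‖ ≤ 1 := by
  rw [norm_smul, norm_inv, norm_norm]
  exact inv_mul_le_one

theorem norm_smul_inv_norm_smul (x : E) : ‖x‖ • ‖x‖⁻¹ • x = x := by
  rcases eq_or_ne x 0 with rfl | hx
  · simp
  · rw [smul_smul, mul_inv_cancel₀ (norm_ne_zero_iff.2 hx), one_smul]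

theorem norm_mul_norm_inv_smul_sub_le (x y : E) :
    ‖y‖ * ‖‖x‖⁻¹ • x - ‖y‖⁻¹ • y‖ ≤ 2 * ‖x - y‖ := by
  calc ‖y‖ * ‖‖x‖⁻¹ • x - ‖y‖⁻¹ • y‖ = ‖(‖y‖ - ‖x‖) • ‖x‖⁻¹ • x + (x - y)‖ := by
        rw [← norm_norm y, ← norm_smul, norm_norm, smul_sub, norm_smul_inv_norm_smul, sub_smul,
          norm_smul_inv_norm_smul]
        abel_nf
    _ ≤ |‖y‖ - ‖x‖| * 1 + ‖x - y‖ := by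
        refine (norm_add_le _ _).trans ?_
        rw [norm_smul, Real.norm_eq_abs]
        gcongr
        exact norm_inv_norm_smul_le_one x
    _ ≤ 2 * ‖x - y‖ := by
        rw [abs_sub_comm]; linarith [abs_norm_sub_norm_le x y]

end NormalizedVector

noncomputable def phasePow (n : ℕ) (z : ℂ) : ℂ := (‖z‖⁻¹ • z) ^ n * z

theorem phasePow_zero_right (n : ℕ) : phasePow n 0 = 0 := by simp [phasePow]

theorem norm_phasePow (n : ℕ) (z : ℂ) : ‖phasePow n z‖ = ‖z‖ := by
  rcases eq_or_ne z 0 with rfl | hz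
  · simp [phasePow]
  · rw [phasePow, norm_mul, norm_pow, norm_smul, norm_inv, norm_norm,
      inv_mul_cancel₀ (norm_ne_zero_iff.2 hz), one_pow, one_mul]

theorem phasePow_mul {c : ℂ} (hc : ‖c‖ = 1) (n : ℕ) (z : ℂ) :
    phasePow n (c * z) = c ^ (n + 1) * phasePow n z := by
  rw [phasePow, phasePow, norm_mul, hc, one_mul, ← mul_smul_comm]
  ring

theorem lipschitzWith_phasePow (n : ℕ) : LipschitzWith (2 * n + 1) (phasePow n) := by
  refine LipschitzWith.of_dist_le_mul fun x y => ?_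
  push_cast
  simp only [dist_eq_norm]
  induction n with
  | zero => simp [phasePow]
  | succ n ih =>
    have hsplit : phasePow (n + 1) x - phasePow (n + 1) y =
        ‖x‖⁻¹ • x * (phasePow n x - phasePow n y) + (‖x‖⁻¹ • x - ‖y‖⁻¹ • y) * phasePow n y := by
      simp only [phasePow]; ring
    calc ‖phasePow (n + 1) x - phasePow (n + 1) y‖
        ≤ ‖‖x‖⁻¹ • x‖ * ‖phasePow n x - phasePow n y‖ + ‖y‖ * ‖‖x‖⁻¹ • x - ‖y‖⁻¹ • y‖ := by
          rw [hsplit]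
          refine (norm_add_le _ _).trans_eq ?_
          rw [norm_mul, norm_mul, norm_phasePow]
          ring
      _ ≤ 1 * ((2 * n + 1) * ‖x - y‖) + 2 * ‖x - y‖ :=
          add_le_add (mul_le_mul (norm_inv_norm_smul_le_one x) ih (norm_nonneg _) zero_le_one)
            (norm_mul_norm_inv_smul_sub_le x y)
      _ = (2 * ↑(n + 1) + 1) * ‖x - y‖ := by push_cast; ring

namespace LipschitzWith

variable {α β 𝕜 E F : Type*} [MeasurableSpace α] [MeasurableSpace β] {μ : Measure α}
  {ν : Measure β} {p : ℝ≥0∞} [NormedAddCommGroup E] [NormedAddCommGroup F] {c : ℝ≥0} {g : E → F}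

theorem compLp_compMeasurePreserving (hg : LipschitzWith c g) (g0 : g 0 = 0) {φ : α → β}
    (hφ : MeasurePreserving φ μ ν) (f : Lp E p ν) :
    hg.compLp g0 (Lp.compMeasurePreserving φ hφ f) =
      Lp.compMeasurePreserving φ hφ (hg.compLp g0 f) := by
  apply Lp.ext
  filter_upwards [hg.coeFn_compLp g0 (Lp.compMeasurePreserving φ hφ f),
    Lp.coeFn_compMeasurePreserving f hφ, Lp.coeFn_compMeasurePreserving (hg.compLp g0 f) hφ,
    hφ.quasiMeasurePreserving.ae_eq_comp (hg.coeFn_compLp g0 f)] with x h1 h2 h3 h4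
  simp only [h1, h2, h3, h4, Function.comp_apply]

theorem compLp_smul [NormedField 𝕜] [NormedSpace 𝕜 E] [NormedSpace 𝕜 F]
    (hg : LipschitzWith c g) (g0 : g 0 = 0) {a b : 𝕜} (hab : ∀ x, g (a • x) = b • g x)
    (f : Lp E p μ) : hg.compLp g0 (a • f) = b • hg.compLp g0 f := by
  apply Lp.ext
  filter_upwards [hg.coeFn_compLp g0 (a • f), Lp.coeFn_smul a f, Lp.coeFn_smul b (hg.compLp g0 f),
    hg.coeFn_compLp g0 f] with x h1 h2 h3 h4
  simp only [h1, h2, h3, h4, Function.comp_apply, Pi.smul_apply, hab]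

theorem norm_compLp (hg : LipschitzWith c g) (g0 : g 0 = 0) (hnorm : ∀ x, ‖g x‖ = ‖x‖)
    (f : Lp E p μ) : ‖hg.compLp g0 f‖ = ‖f‖ := by
  rw [Lp.norm_def, Lp.norm_def, eLpNorm_congr_ae (hg.coeFn_compLp g0 f)]
  exact congr_arg ENNReal.toReal (eLpNorm_congr_norm_ae (Eventually.of_forall fun x => hnorm _))

end LipschitzWith

namespace AddCircle

variable {p : ℝ} [Fact (0 < p)]

theorem exists_pos_nsmul_dist_coe_le {α : ℝ} (hα : 0 < α) (x : AddCircle p) :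
    ∃ m : ℕ, 0 < m ∧ dist (m • (α : AddCircle p)) x ≤ α := by
  obtain ⟨t, ht, rfl⟩ : ∃ t : ℝ, 0 < t ∧ (t : AddCircle p) = x :=
    ⟨_, (equivIoc p 0 x).2.1, coe_equivIoc⟩
  refine ⟨⌈t / α⌉₊, Nat.ceil_pos.2 (div_pos ht hα), ?_⟩
  have hle : t ≤ ⌈t / α⌉₊ * α := (div_le_iff₀ hα).1 (Nat.le_ceil _)
  have hlt : ⌈t / α⌉₊ * α < t + α := by
    have := Nat.ceil_lt_add_one (div_pos ht hα).le
    rw [div_add_one hα.ne', lt_div_iff₀ hα] at this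
    linarith
  rw [← coe_nsmul, dist_eq_norm, ← coe_sub, nsmul_eq_mul]
  refine (QuotientAddGroup.norm_mk_le_norm).trans ?_
  rw [Real.norm_eq_abs, abs_of_nonneg (by linarith)]
  linarith

theorem exists_pos_nsmul_dist_lt {y : AddCircle p} (hy : y ≠ 0) (x : AddCircle p)
    {r : ℝ} (hr : ‖y‖ < r) : ∃ m : ℕ, 0 < m ∧ dist (m • y) x < r := by
  obtain ⟨α, rfl, hα⟩ := QuotientAddGroup.exists_norm_mk_lt y (sub_pos.2 hr)
  rw [add_sub_cancel, Real.norm_eq_abs] at hα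
  rcases lt_or_gt_of_ne (show α ≠ 0 by rintro rfl; exact hy rfl) with hneg | hpos
  · obtain ⟨m, hm, hdist⟩ := exists_pos_nsmul_dist_coe_le (neg_pos.2 hneg) (-x)
    refine ⟨m, hm, ?_⟩
    rw [coe_neg, smul_neg, dist_neg_neg] at hdist
    exact hdist.trans_lt (by rwa [abs_of_neg hneg] at hα)
  · obtain ⟨m, hm, hdist⟩ := exists_pos_nsmul_dist_coe_le hpos x
    exact ⟨m, hm, hdist.trans_lt (by rwa [abs_of_pos hpos] at hα)⟩

theorem exists_nsmul_eq_zero_of_isClosed {s : Set (AddCircle p)} (hs : IsClosed s)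
    (hne : s ≠ univ) (hsmul : ∀ x ∈ s, ∀ n : ℕ, 0 < n → n • x ∈ s) :
    ∃ N : ℕ, 0 < N ∧ ∀ x ∈ s, N • x = 0 := by
  obtain ⟨x₀, hx₀⟩ := (ne_univ_iff_exists_notMem s).1 hne
  obtain ⟨ε, hε, hball⟩ := Metric.isOpen_iff.1 hs.isOpen_compl x₀ hx₀
  obtain ⟨K, hK⟩ := exists_nat_gt (p / ε)
  have hKpos : 0 < K := by exact_mod_cast (div_pos (Fact.out : 0 < p) hε).trans hK
  have hbound : ∀ x ∈ s, ∃ j ∈ Icc 1 K, j • x = 0 := by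
    intro x hx
    obtain ⟨j, hj, hjx⟩ := exists_norm_nsmul_le x hKpos
    refine ⟨j, hj, by_contra fun hne => ?_⟩
    have hsmall : ‖j • x‖ < ε := hjx.trans_lt <| by
      rw [div_lt_iff₀ (by positivity)]
      rw [div_lt_iff₀ hε] at hK
      push_cast; linarith
    obtain ⟨m, hm, hdist⟩ := exists_pos_nsmul_dist_lt hne x₀ hsmall
    rw [← mul_nsmul] at hdist
    exact hball (mem_ball.2 hdist) (hsmul x hx _ (Nat.mul_pos hj.1 hm))
  refine ⟨K.factorial, K.factorial_pos, fun x hx => ?_⟩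
  obtain ⟨j, hj, hjx⟩ := hbound x hx
  obtain ⟨c, hc⟩ := Nat.dvd_factorial hj.1 hj.2
  rw [hc, mul_nsmul, hjx, nsmul_zero]

end AddCircle

theorem Complex.exists_pow_eq_one_of_isClosed_of_ssubset {S : Set ℂ} (hS : IsClosed S)
    (hsub : S ⊂ {z : ℂ | ‖z‖ = 1}) (hpow : ∀ z ∈ S, ∀ n : ℕ, 0 < n → z ^ n ∈ S) :
    ∃ N : ℕ, 0 < N ∧ ∀ z ∈ S, z ^ N = 1 := by
  let e : AddCircle (2 * Real.pi) → ℂ := fun θ => AddCircle.toCircle θ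
  have he : ∀ z : ℂ, ‖z‖ = 1 → ∃ θ, e θ = z := fun z hz => by
    obtain ⟨θ, hθ⟩ := (AddCircle.homeomorphCircle Real.two_pi_pos.ne').surjective
      ⟨z, by simpa [Submonoid.unitSphere] using hz⟩
    exact ⟨θ, by
      change ((AddCircle.toCircle θ : Circle) : ℂ) = z
      rw [← AddCircle.homeomorphCircle_apply Real.two_pi_pos.ne', hθ]⟩
  have he_nsmul : ∀ (n : ℕ) θ, e (n • θ) = e θ ^ n := fun n θ => by
    simp only [e, AddCircle.toCircle_nsmul, Circle.coe_pow]
  have : Fact (0 < 2 * Real.pi) := ⟨Real.two_pi_pos⟩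
  obtain ⟨N, hN, hNs⟩ := AddCircle.exists_nsmul_eq_zero_of_isClosed (s := e ⁻¹' S)
    (hS.preimage (continuous_subtype_val.comp AddCircle.continuous_toCircle))
    (by
      obtain ⟨w, hw, hwS⟩ := exists_of_ssubset hsub
      obtain ⟨θ, rfl⟩ := he w hw
      exact (ne_univ_iff_exists_notMem _).2 ⟨θ, hwS⟩)
    (fun θ hθ n hn => by rw [mem_preimage, he_nsmul]; exact hpow _ hθ n hn)
  refine ⟨N, hN, fun z hz => ?_⟩
  obtain ⟨θ, rfl⟩ := he z (hsub.subset hz)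
  rw [← he_nsmul, hNs θ hz]
  simp [e]

section Koopman

variable {X : Type*} [MeasurableSpace X] {μ : Measure X} {p : ℝ≥0∞} [Fact (1 ≤ p)] {φ : X → X}
  {hφ : MeasurePreserving φ μ μ}

theorem norm_lpKoopman_le : ‖lpKoopman p μ φ hφ‖ ≤ 1 :=
  LinearIsometry.norm_toContinuousLinearMap_le _

theorem IsApproxEigenvalue.lpKoopman_pow_succ {z : ℂ} (hz : ‖z‖ = 1)
    (h : IsApproxEigenvalue (lpKoopman p μ φ hφ) z) (n : ℕ) :
    IsApproxEigenvalue (lpKoopman p μ φ hφ) (z ^ (n + 1)) :=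
  have hψ := lipschitzWith_phasePow n
  h.of_lipschitzWith (hψ.lipschitzWith_compLp (phasePow_zero_right n))
    (hψ.compLp_compMeasurePreserving _ hφ) (hψ.compLp_smul _ (phasePow_mul hz n))
    (hψ.norm_compLp _ (norm_phasePow n))

theorem pow_mem_spectrum_lpKoopman {z : ℂ} (hz : z ∈ spectrum ℂ (lpKoopman p μ φ hφ))
    (hz1 : ‖z‖ = 1) {n : ℕ} (hn : 0 < n) : z ^ n ∈ spectrum ℂ (lpKoopman p μ φ hφ) := by
  obtain ⟨n, rfl⟩ := Nat.exists_eq_add_of_lt hn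
  have hfr := ContinuousLinearMap.mem_frontier_spectrum_of_norm_le hz
    (hz1 ▸ norm_lpKoopman_le)
  exact ((IsApproxEigenvalue.of_mem_frontier_spectrum hfr).lpKoopman_pow_succ hz1 _).mem_spectrum

end Koopman

theorem lp_peripheral_spectrum_finite_of_proper_general
    {X : Type*} [MeasurableSpace X] (μ : Measure X)
    (p : ℝ≥0∞) [Fact (1 ≤ p)]
    (φ : X → X) (hφ : MeasurePreserving φ μ μ)
    (h : spectrum ℂ (lpKoopman p μ φ hφ) ∩ {z : ℂ | ‖z‖ = 1} ≠ {z : ℂ | ‖z‖ = 1}) :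
    (spectrum ℂ (lpKoopman p μ φ hφ) ∩ {z : ℂ | ‖z‖ = 1}).Finite ∧
      ∀ z ∈ spectrum ℂ (lpKoopman p μ φ hφ) ∩ {z : ℂ | ‖z‖ = 1}, ∃ n ≥ 1, z ^ n = 1 := by
  obtain ⟨N, hN, hroots⟩ := Complex.exists_pow_eq_one_of_isClosed_of_ssubset
    ((spectrum.isClosed _).inter (isClosed_eq continuous_norm continuous_const))
    (ssubset_iff_subset_ne.2 ⟨inter_subset_right, h⟩)
    fun z ⟨hz, (hz1 : ‖z‖ = 1)⟩ n hn => ⟨pow_mem_spectrum_lpKoopman hz hz1 hn, by simp [hz1]⟩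
  refine ⟨(Polynomial.nthRootsFinset N (1 : ℂ)).finite_toSet.subset fun z hz => ?_,
    fun z hz => ⟨N, hN, hroots z hz⟩⟩
  exact (Polynomial.mem_nthRootsFinset hN 1).2 (hroots z hz)

/-- If the peripheral spectrum of the composition operator `T_φ` on `L^p(X, μ; ℂ)` is a
proper subset of the unit circle, then it is finite and consists of roots of unity. -/
theorem lp_peripheral_spectrum_finite_of_proper
    {X : Type*} [MeasurableSpace X] (μ : Measure X) [IsProbabilityMeasure μ]
    (p : ℝ≥0∞) [Fact (1 ≤ p)] (hp : p ≠ ∞)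
    (φ : X → X) (hφ : MeasurePreserving φ μ μ)
    (h : spectrum ℂ (lpKoopman p μ φ hφ) ∩ {z : ℂ | ‖z‖ = 1} ≠ {z : ℂ | ‖z‖ = 1}) :
    (spectrum ℂ (lpKoopman p μ φ hφ) ∩ {z : ℂ | ‖z‖ = 1}).Finite ∧
      ∀ z ∈ spectrum ℂ (lpKoopman p μ φ hφ) ∩ {z : ℂ | ‖z‖ = 1}, ∃ n ≥ 1, z ^ n = 1 :=
  lp_peripheral_spectrum_finite_of_proper_general μ p φ hφ h
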